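/- Let (X, 𝒪_n) and (Y, 𝒪'_n) be operator spaces and let φ : X → Y be a linear map. Then the 𝒲-completely bounded norm of φ regarded as a map from (X, 𝒲_max) to (Y, 𝒲_max) equals the completely bounded norm 𝒪(φ)_cb (as an equality in [0, ∞]). -/

import Mathlib

open scoped ComplexOrder Matrix ENNReal TensorProduct

universe u v

noncomputable section

/-- The block-diagonal sum `x ⊕ y` of two square matrices. -/
def blockDiag {X : Type*} [Zero X] {m n : ℕ} (x : Matrix (Fin m) (Fin m) X)
    (y : Matrix (Fin n) (Fin n) X) : Matrix (Fin (m + n)) (Fin (m + n)) X :=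
  Matrix.submatrix (Matrix.fromBlocks x 0 0 y) finSumFinEquiv.symm finSumFinEquiv.symm

/-- The block matrix `[[0, x], [0, 0]]` with `x` in the upper-right corner. -/
def cornerBlock {X : Type*} [Zero X] {n : ℕ} (x : Matrix (Fin n) (Fin n) X) :
    Matrix (Fin (n + n)) (Fin (n + n)) X :=
  Matrix.submatrix (Matrix.fromBlocks 0 x 0 0) finSumFinEquiv.symm finSumFinEquiv.symm

/-- Multiplication `α x` of a scalar matrix with a matrix over a ℂ-module. -/
def scalarMulLeft {X : Type*} [AddCommMonoid X] [Module ℂ X] {m n k : ℕ}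
    (α : Matrix (Fin m) (Fin n) ℂ) (x : Matrix (Fin n) (Fin k) X) :
    Matrix (Fin m) (Fin k) X :=
  Matrix.of fun i j => ∑ l, α i l • x l j

/-- Multiplication `x β` of a matrix over a ℂ-module with a scalar matrix. -/
def scalarMulRight {X : Type*} [AddCommMonoid X] [Module ℂ X] {m n k : ℕ}
    (x : Matrix (Fin m) (Fin n) X) (β : Matrix (Fin n) (Fin k) ℂ) :
    Matrix (Fin m) (Fin k) X :=
  Matrix.of fun i j => ∑ l, β l j • x i l

/-- Operator norm of a rectangular complex matrix, as an operator ℓ²(Fin n) → ℓ²(Fin m). -/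
def matOpNorm {m n : ℕ} (α : Matrix (Fin m) (Fin n) ℂ) : ℝ :=
  ‖LinearMap.toContinuousLinearMap (Matrix.toEuclideanLin α)‖

/-- The numerical radius of a bounded operator on a complex inner product space. -/
def numRadius {H : Type*} [NormedAddCommGroup H] [InnerProductSpace ℂ H]
    (a : H →L[ℂ] H) : ℝ :=
  ⨆ ξ : {ξ : H // ‖ξ‖ ≤ 1}, ‖(inner ℂ (ξ : H) (a ξ) : ℂ)‖

/-- The bounded operator `Hⁿ → Hᵐ` induced by an `m × n` matrix of bounded operators,
where `Hⁿ` carries the ℓ²-direct sum structure. -/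
def matOpRect {H : Type*} [NormedAddCommGroup H] [InnerProductSpace ℂ H] {m n : ℕ}
    (a : Matrix (Fin m) (Fin n) (H →L[ℂ] H)) :
    (PiLp 2 fun _ : Fin n => H) →L[ℂ] (PiLp 2 fun _ : Fin m => H) :=
  ((PiLp.continuousLinearEquiv 2 ℂ (fun _ : Fin m => H)).symm.toContinuousLinearMap) ∘L
    (ContinuousLinearMap.pi fun i => ∑ j, (a i j).comp (ContinuousLinearMap.proj j)) ∘L
    ((PiLp.continuousLinearEquiv 2 ℂ (fun _ : Fin n => H)).toContinuousLinearMap)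

/-- The bounded operator on `Hⁿ` induced by an `n × n` matrix of bounded operators. -/
def matOp {H : Type*} [NormedAddCommGroup H] [InnerProductSpace ℂ H] {n : ℕ}
    (a : Matrix (Fin n) (Fin n) (H →L[ℂ] H)) :
    (PiLp 2 fun _ : Fin n => H) →L[ℂ] (PiLp 2 fun _ : Fin n => H) :=
  matOpRect a

/-- The numerical radius of a complex `n × n` matrix, acting on `ℂⁿ`. -/
def matNumRadius {n : ℕ} (a : Matrix (Fin n) (Fin n) ℂ) : ℝ :=
  numRadius (LinearMap.toContinuousLinearMap (Matrix.toEuclideanLin a))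

/-- The identification of `M_k(M_n(ℂ))` with `M_{kn}(ℂ)`. -/
def flatten {k n : ℕ} (x : Matrix (Fin k) (Fin k) (Matrix (Fin n) (Fin n) ℂ)) :
    Matrix (Fin (k * n)) (Fin (k * n)) ℂ :=
  Matrix.of fun i j =>
    x (finProdFinEquiv.symm i).1 (finProdFinEquiv.symm j).1
      (finProdFinEquiv.symm i).2 (finProdFinEquiv.symm j).2

/-- An (abstract) numerical radius operator space: a complex vector space `X` together with a
norm `W n` on each matrix space `M_n(X)` satisfying the conditions (WI) and (WII). -/
structure NRNorm (X : Type u) [AddCommGroup X] [Module ℂ X] where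
  W : ∀ n : ℕ, Matrix (Fin n) (Fin n) X → ℝ
  nonneg : ∀ (n : ℕ) (x : Matrix (Fin n) (Fin n) X), 0 ≤ W n x
  eq_zero_iff : ∀ (n : ℕ) (x : Matrix (Fin n) (Fin n) X), W n x = 0 ↔ x = 0
  add_le : ∀ (n : ℕ) (x y : Matrix (Fin n) (Fin n) X), W n (x + y) ≤ W n x + W n y
  smul_eq : ∀ (n : ℕ) (c : ℂ) (x : Matrix (Fin n) (Fin n) X), W n (c • x) = ‖c‖ * W n x
  cond_WI : ∀ (m n : ℕ) (x : Matrix (Fin m) (Fin m) X) (y : Matrix (Fin n) (Fin n) X),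
    W (m + n) (blockDiag x y) = max (W m x) (W n y)
  cond_WII : ∀ (m n : ℕ) (α : Matrix (Fin n) (Fin m) ℂ) (x : Matrix (Fin m) (Fin m) X),
    W n (scalarMulRight (scalarMulLeft α x) αᴴ) ≤ matOpNorm α ^ 2 * W m x

/-- An (abstract) operator space: a complex vector space `X` together with a norm `O n` on each
matrix space `M_n(X)` satisfying Ruan's axioms (OI) and (OII). -/
structure OSNorm (X : Type u) [AddCommGroup X] [Module ℂ X] where
  O : ∀ n : ℕ, Matrix (Fin n) (Fin n) X → ℝ
  nonneg : ∀ (n : ℕ) (x : Matrix (Fin n) (Fin n) X), 0 ≤ O n x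
  eq_zero_iff : ∀ (n : ℕ) (x : Matrix (Fin n) (Fin n) X), O n x = 0 ↔ x = 0
  add_le : ∀ (n : ℕ) (x y : Matrix (Fin n) (Fin n) X), O n (x + y) ≤ O n x + O n y
  smul_eq : ∀ (n : ℕ) (c : ℂ) (x : Matrix (Fin n) (Fin n) X), O n (c • x) = ‖c‖ * O n x
  cond_OI : ∀ (m n : ℕ) (x : Matrix (Fin m) (Fin m) X) (y : Matrix (Fin n) (Fin n) X),
    O (m + n) (blockDiag x y) = max (O m x) (O n y)
  cond_OII : ∀ (m n : ℕ) (α : Matrix (Fin n) (Fin m) ℂ) (x : Matrix (Fin m) (Fin m) X)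
    (β : Matrix (Fin m) (Fin n) ℂ),
    O n (scalarMulRight (scalarMulLeft α x) β) ≤ matOpNorm α * O m x * matOpNorm β

/-- The completely bounded norm (valued in `[0, ∞]`) of a linear map, with respect to given
matrix norm sequences on the domain and the codomain. -/
def cbNorm {X Y : Type*} (WX : ∀ n : ℕ, Matrix (Fin n) (Fin n) X → ℝ)
    (WY : ∀ n : ℕ, Matrix (Fin n) (Fin n) Y → ℝ) (φ : X → Y) : ℝ≥0∞ :=
  ⨆ (n : ℕ) (x : Matrix (Fin n) (Fin n) X) (_ : WX n x ≤ 1),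
    ENNReal.ofReal (WY n (x.map φ))

/-- The maximal numerical radius norm affiliated with an operator space `(X, 𝒪_n)`. -/
def Wmax {X : Type u} [AddCommGroup X] [Module ℂ X] (OS : OSNorm X)
    (n : ℕ) (x : Matrix (Fin n) (Fin n) X) : ℝ :=
  sInf {t | ∃ (r : ℕ) (a : Matrix (Fin n) (Fin r) ℂ) (y : Matrix (Fin r) (Fin r) X)
      (b : Matrix (Fin r) (Fin n) ℂ),
    x = scalarMulRight (scalarMulLeft a y) b ∧ OS.O r y = 1 ∧
      t = (1 / 2) * matOpNorm (a * aᴴ + bᴴ * b)}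

/-- A complex Hilbert space together with a linear map of `X` into its bounded operators. -/
structure HilbertRep (X : Type u) [AddCommGroup X] [Module ℂ X] where
  H : Type u
  [instN : NormedAddCommGroup H]
  [instI : InnerProductSpace ℂ H]
  [instC : CompleteSpace H]
  Φ : X →ₗ[ℂ] (H →L[ℂ] H)

attribute [instance] HilbertRep.instN HilbertRep.instI HilbertRep.instC

end

/-!
The maximal numerical radius norm is comparable to the operator space norm,
`𝒪_n(x) / 2 ≤ 𝒲_max(x)`, and it recovers `𝒪_n` exactly on corner matrices:
`𝒲_max([[0, 2x], [0, 0]]) = 𝒪_n(x)`. Since `φ` commutes with the corner embedding, this gives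
`𝒪(φ)_cb ≤ 𝒲(φ)_cb`. Conversely, a factorization `x = a y b` is pushed forward to
`φ_n(x) = a φ_r(y) b`, and `𝒲_max(a z b) ≤ 𝒪_r(z) · ½‖a a* + b* b‖` for every `z`, so
`𝒲_max(φ_n(x)) ≤ 𝒪(φ)_cb · 𝒲_max(x)`.
-/

open scoped Matrix.Norms.L2Operator MatrixOrder

section MatOpNorm

lemma matOpNorm_eq_norm {m n : ℕ} (α : Matrix (Fin m) (Fin n) ℂ) : matOpNorm α = ‖α‖ := rfl

lemma matOpNorm_nonneg {m n : ℕ} (α : Matrix (Fin m) (Fin n) ℂ) : 0 ≤ matOpNorm α :=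
  norm_nonneg α

lemma matOpNorm_one_le (n : ℕ) : matOpNorm (1 : Matrix (Fin n) (Fin n) ℂ) ≤ 1 := by
  have h := Matrix.l2_opNorm_conjTranspose_mul_self (1 : Matrix (Fin n) (Fin n) ℂ)
  rw [Matrix.conjTranspose_one, mul_one] at h
  rw [matOpNorm_eq_norm]
  nlinarith [norm_nonneg (1 : Matrix (Fin n) (Fin n) ℂ)]

lemma matOpNorm_le_one_of_conjTranspose_mul_self {m n : ℕ} {v : Matrix (Fin m) (Fin n) ℂ}
    (hv : vᴴ * v = 1) : matOpNorm v ≤ 1 := by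
  have h := Matrix.l2_opNorm_conjTranspose_mul_self v
  rw [hv] at h
  rw [matOpNorm_eq_norm]
  nlinarith [norm_nonneg v, matOpNorm_one_le n, matOpNorm_eq_norm (1 : Matrix (Fin n) (Fin n) ℂ)]

lemma matOpNorm_mul_matOpNorm_le {m r : ℕ} (a : Matrix (Fin m) (Fin r) ℂ)
    (b : Matrix (Fin r) (Fin m) ℂ) :
    matOpNorm a * matOpNorm b ≤ matOpNorm (a * aᴴ + bᴴ * b) := by
  have hA : 0 ≤ a * aᴴ := (Matrix.posSemidef_self_mul_conjTranspose a).nonneg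
  have hB : 0 ≤ bᴴ * b := (Matrix.posSemidef_conjTranspose_mul_self b).nonneg
  have ha : ‖a‖ * ‖a‖ ≤ ‖a * aᴴ + bᴴ * b‖ := by
    rw [← Matrix.l2_opNorm_conjTranspose a, ← Matrix.l2_opNorm_conjTranspose_mul_self,
      Matrix.conjTranspose_conjTranspose]
    exact CStarAlgebra.norm_le_norm_of_nonneg_of_le hA (le_add_of_nonneg_right hB)
  have hb : ‖b‖ * ‖b‖ ≤ ‖a * aᴴ + bᴴ * b‖ := by
    rw [← Matrix.l2_opNorm_conjTranspose_mul_self]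
    exact CStarAlgebra.norm_le_norm_of_nonneg_of_le hB (le_add_of_nonneg_left hA)
  simp only [matOpNorm_eq_norm]
  nlinarith [sq_nonneg (‖a‖ - ‖b‖)]

end MatOpNorm

section ScalarMul

variable {X : Type*} [AddCommMonoid X] [Module ℂ X] {m n r : ℕ}

lemma scalarMul_smul (c d e : ℂ) (a : Matrix (Fin m) (Fin r) ℂ) (y : Matrix (Fin r) (Fin r) X)
    (b : Matrix (Fin r) (Fin n) ℂ) :
    scalarMulRight (scalarMulLeft (c • a) (d • y)) (e • b)
      = (c * d * e) • scalarMulRight (scalarMulLeft a y) b := by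
  ext i j
  simp only [scalarMulLeft, scalarMulRight, Matrix.of_apply, Matrix.smul_apply, Finset.smul_sum,
    smul_smul, smul_eq_mul]
  refine Finset.sum_congr rfl fun _ _ => Finset.sum_congr rfl fun _ _ => ?_
  ring_nf

lemma scalarMul_smul_middle (c : ℂ) (a : Matrix (Fin m) (Fin r) ℂ)
    (y : Matrix (Fin r) (Fin r) X) (b : Matrix (Fin r) (Fin n) ℂ) :
    scalarMulRight (scalarMulLeft a (c • y)) b = c • scalarMulRight (scalarMulLeft a y) b := by
  simpa using scalarMul_smul 1 c 1 a y b

lemma scalarMul_one_one (y : Matrix (Fin n) (Fin n) X) :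
    scalarMulRight (scalarMulLeft 1 y) 1 = y := by
  ext i j
  simp [scalarMulLeft, scalarMulRight, Matrix.one_apply, ite_smul]

lemma scalarMul_zero_left (y : Matrix (Fin r) (Fin r) X) (b : Matrix (Fin r) (Fin n) ℂ) :
    scalarMulRight (scalarMulLeft (0 : Matrix (Fin m) (Fin r) ℂ) y) b = 0 := by
  ext i j
  simp [scalarMulLeft, scalarMulRight]

lemma scalarMul_zero_middle (a : Matrix (Fin m) (Fin r) ℂ) (b : Matrix (Fin r) (Fin n) ℂ) :
    scalarMulRight (scalarMulLeft a (0 : Matrix (Fin r) (Fin r) X)) b = 0 := by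
  ext i j
  simp [scalarMulLeft, scalarMulRight]

lemma scalarMul_map {Y : Type*} [AddCommMonoid Y] [Module ℂ Y] (φ : X →ₗ[ℂ] Y)
    (a : Matrix (Fin m) (Fin r) ℂ) (y : Matrix (Fin r) (Fin r) X) (b : Matrix (Fin r) (Fin n) ℂ) :
    (scalarMulRight (scalarMulLeft a y) b).map φ
      = scalarMulRight (scalarMulLeft a (y.map φ)) b := by
  ext i j
  simp [scalarMulLeft, scalarMulRight]

end ScalarMul

section Wmax

variable {X : Type u} [AddCommGroup X] [Module ℂ X] (OS : OSNorm X)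

lemma OSNorm.O_zero (n : ℕ) : OS.O n (0 : Matrix (Fin n) (Fin n) X) = 0 :=
  (OS.eq_zero_iff n 0).mpr rfl

lemma OSNorm.O_pos {n : ℕ} {x : Matrix (Fin n) (Fin n) X} (hx : x ≠ 0) : 0 < OS.O n x :=
  (OS.nonneg n x).lt_of_ne' fun h => hx ((OS.eq_zero_iff n x).mp h)

lemma OSNorm.O_inv_smul_self {n : ℕ} {x : Matrix (Fin n) (Fin n) X} (hx : x ≠ 0) :
    OS.O n (((OS.O n x : ℝ) : ℂ)⁻¹ • x) = 1 := by
  rw [OS.smul_eq, norm_inv, Complex.norm_real, Real.norm_of_nonneg (OS.nonneg n x),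
    inv_mul_cancel₀ (OS.O_pos hx).ne']

lemma OSNorm.O_two_smul {n : ℕ} (x : Matrix (Fin n) (Fin n) X) :
    OS.O n ((2 : ℂ) • x) = 2 * OS.O n x := by
  rw [OS.smul_eq, Complex.norm_two]

def WmaxSet (n : ℕ) (x : Matrix (Fin n) (Fin n) X) : Set ℝ :=
  {t | ∃ (r : ℕ) (a : Matrix (Fin n) (Fin r) ℂ) (y : Matrix (Fin r) (Fin r) X)
      (b : Matrix (Fin r) (Fin n) ℂ),
    x = scalarMulRight (scalarMulLeft a y) b ∧ OS.O r y = 1 ∧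
      t = (1 / 2) * matOpNorm (a * aᴴ + bᴴ * b)}

lemma Wmax_eq_sInf (n : ℕ) (x : Matrix (Fin n) (Fin n) X) :
    Wmax OS n x = sInf (WmaxSet OS n x) := rfl

lemma nonneg_of_mem_WmaxSet {n : ℕ} {x : Matrix (Fin n) (Fin n) X} {t : ℝ}
    (ht : t ∈ WmaxSet OS n x) : 0 ≤ t := by
  obtain ⟨r, a, y, b, -, -, rfl⟩ := ht
  exact mul_nonneg (by norm_num) (matOpNorm_nonneg _)

lemma Wmax_nonneg (n : ℕ) (x : Matrix (Fin n) (Fin n) X) : 0 ≤ Wmax OS n x :=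
  Real.sInf_nonneg fun _ => nonneg_of_mem_WmaxSet OS

lemma Wmax_le_of_mem {n : ℕ} {x : Matrix (Fin n) (Fin n) X} {t : ℝ}
    (ht : t ∈ WmaxSet OS n x) : Wmax OS n x ≤ t :=
  csInf_le ⟨0, fun _ => nonneg_of_mem_WmaxSet OS⟩ ht

lemma Wmax_zero (n : ℕ) : Wmax OS n (0 : Matrix (Fin n) (Fin n) X) = 0 := by
  refine le_antisymm ?_ (Wmax_nonneg OS n 0)
  rcases (WmaxSet OS n 0).eq_empty_or_nonempty with h | ⟨_, r, -, y, -, -, hy, -⟩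
  · rw [Wmax_eq_sInf, h, Real.sInf_empty]
  · refine Wmax_le_of_mem OS ⟨r, 0, y, 0, (scalarMul_zero_left y 0).symm, hy, ?_⟩
    simp [matOpNorm_eq_norm]

/-- Normalizing `y` to `y / 𝒪_r(y)` rescales `a a* + b* b` by `𝒪_r(y)`. -/
lemma mem_WmaxSet {n r : ℕ} (a : Matrix (Fin n) (Fin r) ℂ) {y : Matrix (Fin r) (Fin r) X}
    (b : Matrix (Fin r) (Fin n) ℂ) (hy : y ≠ 0) :
    OS.O r y * ((1 / 2) * matOpNorm (a * aᴴ + bᴴ * b))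
      ∈ WmaxSet OS n (scalarMulRight (scalarMulLeft a y) b) := by
  have hc := OS.O_pos hy
  set c := OS.O r y
  set d : ℂ := (Real.sqrt c : ℂ)
  have hdd : d * d = c := by rw [← Complex.ofReal_mul, Real.mul_self_sqrt hc.le]
  have hd : star d = d := Complex.conj_ofReal _
  refine ⟨r, d • a, (c : ℂ)⁻¹ • y, d • b, ?_, ?_, ?_⟩
  · rw [scalarMul_smul, mul_right_comm, hdd, mul_inv_cancel₀ (by exact_mod_cast hc.ne'),
      one_smul]
  · exact OS.O_inv_smul_self hy
  · rw [Matrix.conjTranspose_smul, Matrix.conjTranspose_smul, hd, Matrix.smul_mul,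
      Matrix.mul_smul, smul_smul, hdd, Matrix.smul_mul, Matrix.mul_smul, smul_smul, hdd,
      ← smul_add, matOpNorm_eq_norm, matOpNorm_eq_norm, norm_smul, Complex.norm_real,
      Real.norm_of_nonneg hc.le]
    ring

lemma Wmax_scalarMul_le {n r : ℕ} (a : Matrix (Fin n) (Fin r) ℂ) (y : Matrix (Fin r) (Fin r) X)
    (b : Matrix (Fin r) (Fin n) ℂ) :
    Wmax OS n (scalarMulRight (scalarMulLeft a y) b)
      ≤ OS.O r y * ((1 / 2) * matOpNorm (a * aᴴ + bᴴ * b)) := by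
  rcases eq_or_ne y 0 with rfl | hy
  · rw [scalarMul_zero_middle, Wmax_zero, OS.O_zero, zero_mul]
  · exact Wmax_le_of_mem OS (mem_WmaxSet OS a b hy)

lemma WmaxSet_nonempty {n : ℕ} {x : Matrix (Fin n) (Fin n) X} (hx : x ≠ 0) :
    (WmaxSet OS n x).Nonempty := by
  have h := mem_WmaxSet OS (1 : Matrix (Fin n) (Fin n) ℂ) 1 hx
  rw [scalarMul_one_one] at h
  exact ⟨_, h⟩

/-- Every factorization `x = a y b` with `𝒪_r(y) = 1` has `𝒪_n(x) ≤ ‖a‖‖b‖ ≤ ‖a a* + b* b‖`. -/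
lemma OSNorm.O_le_two_mul_Wmax {n : ℕ} (x : Matrix (Fin n) (Fin n) X) :
    OS.O n x ≤ 2 * Wmax OS n x := by
  rcases eq_or_ne x 0 with rfl | hx
  · rw [OS.O_zero, Wmax_zero, mul_zero]
  suffices OS.O n x / 2 ≤ Wmax OS n x by linarith
  refine le_csInf (WmaxSet_nonempty OS hx) ?_
  rintro _ ⟨r, a, y, b, rfl, hy, rfl⟩
  have h := OS.cond_OII r n a y b
  rw [hy, mul_one] at h
  linarith [matOpNorm_mul_matOpNorm_le a b]

end Wmax

section Corner

lemma cornerBlock_map {X Y : Type*} [Zero X] [Zero Y] (f : X → Y) (hf : f 0 = 0) {n : ℕ}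
    (x : Matrix (Fin n) (Fin n) X) : (cornerBlock x).map f = cornerBlock (x.map f) := by
  rw [cornerBlock, cornerBlock, ← Matrix.submatrix_map, Matrix.fromBlocks_map,
    Matrix.map_zero f hf]

def inlMat (n : ℕ) : Matrix (Fin (n + n)) (Fin n) ℂ :=
  Matrix.of fun i j => if finSumFinEquiv.symm i = Sum.inl j then 1 else 0

def inrMat (n : ℕ) : Matrix (Fin (n + n)) (Fin n) ℂ :=
  Matrix.of fun i j => if finSumFinEquiv.symm i = Sum.inr j then 1 else 0

lemma inlMat_conjTranspose_mul_self (n : ℕ) : (inlMat n)ᴴ * inlMat n = 1 := by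
  ext i j
  rw [Matrix.mul_apply, ← Equiv.sum_comp (finSumFinEquiv (m := n) (n := n))]
  simp [inlMat, Matrix.one_apply, Matrix.conjTranspose_apply, apply_ite star, eq_comm]

lemma inrMat_conjTranspose_mul_self (n : ℕ) : (inrMat n)ᴴ * inrMat n = 1 := by
  ext i j
  rw [Matrix.mul_apply, ← Equiv.sum_comp (finSumFinEquiv (m := n) (n := n))]
  simp [inrMat, Matrix.one_apply, Matrix.conjTranspose_apply, apply_ite star, eq_comm]

lemma inlMat_mul_add_inrMat_mul (n : ℕ) :
    inlMat n * (inlMat n)ᴴ + inrMat n * (inrMat n)ᴴ = 1 := by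
  ext i j
  have hij : i = j ↔ finSumFinEquiv.symm i = finSumFinEquiv.symm j :=
    finSumFinEquiv.symm.injective.eq_iff.symm
  rcases hi : finSumFinEquiv.symm i with i' | i' <;>
    rcases hj : finSumFinEquiv.symm j with j' | j' <;>
    simp [Matrix.mul_apply, inlMat, inrMat, Matrix.one_apply, Matrix.conjTranspose_apply,
      apply_ite star, hi, hj, hij]

variable {X : Type*} [AddCommMonoid X] [Module ℂ X] {n : ℕ}

lemma cornerBlock_eq_scalarMul (x : Matrix (Fin n) (Fin n) X) :
    cornerBlock x = scalarMulRight (scalarMulLeft (inlMat n) x) (inrMat n)ᴴ := by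
  ext i j
  rcases hi : finSumFinEquiv.symm i with i' | i' <;>
    rcases hj : finSumFinEquiv.symm j with j' | j' <;>
    simp [hi, hj, cornerBlock, scalarMulLeft, scalarMulRight, inlMat, inrMat,
      Matrix.conjTranspose_apply, apply_ite star, ite_smul]

lemma scalarMul_cornerBlock (x : Matrix (Fin n) (Fin n) X) :
    scalarMulRight (scalarMulLeft (inlMat n)ᴴ (cornerBlock x)) (inrMat n) = x := by
  ext i j
  simp only [scalarMulLeft, scalarMulRight, inlMat, inrMat, cornerBlock, Matrix.of_apply,
    Matrix.conjTranspose_apply, Matrix.submatrix_apply, apply_ite star, star_one, star_zero,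
    ite_smul, one_smul, zero_smul, Equiv.symm_apply_eq]
  simp only [Finset.sum_ite_eq', Finset.mem_univ, if_true, Equiv.symm_apply_apply,
    Matrix.fromBlocks_apply₁₂]

end Corner

section CornerNorm

variable {X : Type u} [AddCommGroup X] [Module ℂ X] (OS : OSNorm X)

lemma Wmax_two_smul_cornerBlock {n : ℕ} (x : Matrix (Fin n) (Fin n) X) :
    Wmax OS (n + n) ((2 : ℂ) • cornerBlock x) = OS.O n x := by
  apply le_antisymm
  · have hS : inlMat n * (inlMat n)ᴴ + (inrMat n)ᴴᴴ * (inrMat n)ᴴ = 1 := by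
      rw [Matrix.conjTranspose_conjTranspose, inlMat_mul_add_inrMat_mul]
    have h := Wmax_scalarMul_le OS (inlMat n) ((2 : ℂ) • x) (inrMat n)ᴴ
    rw [hS, OS.O_two_smul, scalarMul_smul_middle, ← cornerBlock_eq_scalarMul] at h
    nlinarith [matOpNorm_one_le (n + n), OS.nonneg n x]
  · have hl : matOpNorm (inlMat n)ᴴ ≤ 1 := by
      rw [matOpNorm_eq_norm, Matrix.l2_opNorm_conjTranspose, ← matOpNorm_eq_norm]
      exact matOpNorm_le_one_of_conjTranspose_mul_self (inlMat_conjTranspose_mul_self n)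
    have hr := matOpNorm_le_one_of_conjTranspose_mul_self (inrMat_conjTranspose_mul_self n)
    have h := OS.cond_OII (n + n) n (inlMat n)ᴴ ((2 : ℂ) • cornerBlock x) (inrMat n)
    rw [scalarMul_smul_middle, scalarMul_cornerBlock, OS.O_two_smul] at h
    have hO := OS.nonneg (n + n) ((2 : ℂ) • cornerBlock x)
    have h1 := mul_le_mul (mul_le_mul_of_nonneg_right hl hO) hr (matOpNorm_nonneg _)
      (by positivity)
    linarith [OS.O_le_two_mul_Wmax ((2 : ℂ) • cornerBlock x)]

end CornerNorm

section CbNorm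

variable {X Y : Type*} {WX : ∀ n : ℕ, Matrix (Fin n) (Fin n) X → ℝ}
  {WY : ∀ n : ℕ, Matrix (Fin n) (Fin n) Y → ℝ} {φ : X → Y}

lemma ofReal_le_cbNorm {n : ℕ} {x : Matrix (Fin n) (Fin n) X} (hx : WX n x ≤ 1) :
    ENNReal.ofReal (WY n (x.map φ)) ≤ cbNorm WX WY φ :=
  le_iSup₂_of_le n x (le_iSup_of_le hx le_rfl)

lemma cbNorm_le_iff {c : ℝ≥0∞} :
    cbNorm WX WY φ ≤ c ↔
      ∀ (n : ℕ) (x : Matrix (Fin n) (Fin n) X), WX n x ≤ 1 →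
        ENNReal.ofReal (WY n (x.map φ)) ≤ c := by
  simp only [cbNorm, iSup_le_iff]

end CbNorm

section Map

variable {X : Type u} {Y : Type v} [AddCommGroup X] [Module ℂ X] [AddCommGroup Y] [Module ℂ Y]
  (OS : OSNorm X) (OS' : OSNorm Y) (φ : X →ₗ[ℂ] Y)

lemma OSNorm.O_map_le_cbNorm_mul (h : cbNorm OS.O OS'.O φ ≠ ⊤) (n : ℕ)
    (x : Matrix (Fin n) (Fin n) X) :
    OS'.O n (x.map φ) ≤ (cbNorm OS.O OS'.O φ).toReal * OS.O n x := by
  rcases eq_or_ne x 0 with rfl | hx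
  · rw [Matrix.map_zero _ φ.map_zero, OS'.O_zero, OS.O_zero, mul_zero]
  have hc := OS.O_pos hx
  set c := OS.O n x
  have hmap : OS'.O n (((c : ℂ)⁻¹ • x).map φ) = c⁻¹ * OS'.O n (x.map φ) := by
    rw [Matrix.map_smul _ _ (φ.map_smul _), OS'.smul_eq, norm_inv, Complex.norm_real,
      Real.norm_of_nonneg hc.le]
  have h1 := ENNReal.toReal_mono h
    (ofReal_le_cbNorm (WY := OS'.O) (φ := φ) (OS.O_inv_smul_self hx).le)
  rw [ENNReal.toReal_ofReal (OS'.nonneg _ _), hmap, inv_mul_le_iff₀ hc] at h1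
  linarith

/-- `φ_n` maps a factorization `x = a y b` to the factorization `φ_n(x) = a φ_r(y) b`. -/
lemma Wmax_map_le {C : ℝ} (hC : 0 ≤ C)
    (hφ : ∀ (r : ℕ) (y : Matrix (Fin r) (Fin r) X), OS'.O r (y.map φ) ≤ C * OS.O r y)
    {n : ℕ} (x : Matrix (Fin n) (Fin n) X) :
    Wmax OS' n (x.map φ) ≤ C * Wmax OS n x := by
  rcases eq_or_ne x 0 with rfl | hx
  · rw [Matrix.map_zero _ φ.map_zero, Wmax_zero, Wmax_zero, mul_zero]
  rw [Wmax_eq_sInf OS, ← smul_eq_mul, ← Real.sInf_smul_of_nonneg hC]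
  refine le_csInf ((WmaxSet_nonempty OS hx).smul_set) ?_
  rintro _ ⟨_, ⟨r, a, y, b, rfl, hy, rfl⟩, rfl⟩
  dsimp only
  rw [smul_eq_mul, scalarMul_map]
  calc Wmax OS' n (scalarMulRight (scalarMulLeft a (y.map φ)) b)
      ≤ OS'.O r (y.map φ) * ((1 / 2) * matOpNorm (a * aᴴ + bᴴ * b)) :=
        Wmax_scalarMul_le OS' a _ b
    _ ≤ C * ((1 / 2) * matOpNorm (a * aᴴ + bᴴ * b)) := by
        gcongr
        · exact mul_nonneg (by norm_num) (matOpNorm_nonneg _)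
        · simpa [hy] using hφ r y

end Map

/-- Theorem 3.9 (1): `𝒲(φ : 𝒲_max(X) → 𝒲_max(Y))_cb = 𝒪(φ)_cb` in `[0, ∞]`. -/
theorem stmt_18 {X : Type u} {Y : Type v} [AddCommGroup X] [Module ℂ X]
    [AddCommGroup Y] [Module ℂ Y] (OS : OSNorm X) (OS' : OSNorm Y) (φ : X →ₗ[ℂ] Y) :
    cbNorm (Wmax OS) (Wmax OS') ⇑φ = cbNorm OS.O OS'.O ⇑φ := by
  apply le_antisymm
  · rw [cbNorm_le_iff]
    intro n x hx
    rcases eq_or_ne (cbNorm OS.O OS'.O φ) ⊤ with h | h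
    · exact h ▸ le_top
    set C := (cbNorm OS.O OS'.O φ).toReal
    have hW := Wmax_map_le OS OS' φ ENNReal.toReal_nonneg (OS.O_map_le_cbNorm_mul OS' φ h) x
    calc ENNReal.ofReal (Wmax OS' n (x.map φ)) ≤ ENNReal.ofReal C :=
          ENNReal.ofReal_le_ofReal (hW.trans (mul_le_of_le_one_right ENNReal.toReal_nonneg hx))
      _ = cbNorm OS.O OS'.O φ := ENNReal.ofReal_toReal h
  · rw [cbNorm_le_iff]
    intro n x hx
    have h := ofReal_le_cbNorm (WY := Wmax OS') (φ := φ)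
      ((Wmax_two_smul_cornerBlock OS x).trans_le hx)
    rwa [Matrix.map_smul _ _ (φ.map_smul _), cornerBlock_map φ φ.map_zero,
      Wmax_two_smul_cornerBlock] at h
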